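/- Let E be a directed graph whose Leavitt path algebra over a field K is graded left primitive. Then the vertex set E⁰ has the Countable Separation Property. -/

import Mathlib

/-!
Pick a homogeneous `m₀ ≠ 0` fixed by some vertex (vertices are nonzero in `L_K(E)`, as its
representation on functions on boundary paths shows). By graded simplicity every element of
the module is `b m₀` with `b` a combination of monomials `pq*`, and when the element is
homogeneous `b` may be taken homogeneous of the matching degree. It follows that only
finitely many vertices and finitely many ghost edges act nontrivially on a homogeneous
element, so the set `C` of vertices `z` with `z q* m₀ ≠ 0` for some path `q` is countable.
Finally faithfulness gives, for every vertex `v`, a monomial with `v p q* m₀ ≠ 0`, and then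
`v ≥ r(p) = r(q) ∈ C`.
-/

/-- A directed graph with vertex set `V`, edge set `E`, source map `s` and range map `r`. -/
structure DiGraph where
  V : Type
  E : Type
  s : E → V
  r : E → V

namespace DiGraph

variable (G : DiGraph)

/-- There is an edge from `u` to `w`. -/
def Step (u w : G.V) : Prop := ∃ e : G.E, G.s e = u ∧ G.r e = w

/-- `G.Reach u w` means `u ≥ w`: there is a (possibly trivial) directed path from `u` to `w`. -/
def Reach (u w : G.V) : Prop := Relation.ReflTransGen G.Step u w

/-- The root `R(W)` of a set of vertices `W`. -/
def root (W : Set G.V) : Set G.V := {u | ∃ w ∈ W, G.Reach u w}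

/-- A set `H` of vertices is hereditary if `u ∈ H` and `u ≥ w` imply `w ∈ H`. -/
def Hereditary (H : Set G.V) : Prop := ∀ u ∈ H, ∀ w, G.Reach u w → w ∈ H

/-- A vertex is regular if it emits at least one and only finitely many edges. -/
def Regular (v : G.V) : Prop := (G.s ⁻¹' {v}).Nonempty ∧ (G.s ⁻¹' {v}).Finite

/-- A set `H` is saturated if every regular vertex all of whose out-edges
have ranges in `H` lies in `H`. -/
def Saturated (H : Set G.V) : Prop :=
  ∀ v, G.Regular v → (∀ e, G.s e = v → G.r e ∈ H) → v ∈ H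

/-- A set of vertices is downwards directed if every two of its elements have a
common lower bound in it. -/
def DownDirected (W : Set G.V) : Prop :=
  ∀ u ∈ W, ∀ v ∈ W, ∃ w ∈ W, G.Reach u w ∧ G.Reach v w

/-- The Countable Separation Property of a set of vertices. -/
def CSP (W : Set G.V) : Prop := ∃ C : Set G.V, C.Countable ∧ W ⊆ G.root C

/-- The Inner Countable Separation Property of a set of vertices. -/
def ICSP (W : Set G.V) : Prop := ∃ C : Set G.V, C.Countable ∧ C ⊆ W ∧ W ⊆ G.root C

/-- `G.IsPathFrom v l` : the list of edges `l` forms a directed path starting at `v`. -/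
def IsPathFrom : (G : DiGraph) → G.V → List G.E → Prop
  | _, _, [] => True
  | G, v, e :: es => G.s e = v ∧ G.IsPathFrom (G.r e) es

/-- The end (range) vertex of a path `l` starting at `v`. -/
def pathEnd : (G : DiGraph) → G.V → List G.E → G.V
  | _, v, [] => v
  | G, _, e :: es => G.pathEnd (G.r e) es

/-- The set of vertices on a path `l` starting at `v`. -/
def pathVerts (v : G.V) (l : List G.E) : Set G.V := insert v {w | ∃ e ∈ l, G.r e = w}

/-- A cycle based at `v` : a nonempty closed path in which distinct edges have
distinct sources. -/
def IsCycle (v : G.V) (l : List G.E) : Prop :=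
  l ≠ [] ∧ G.IsPathFrom v l ∧ G.pathEnd v l = v ∧ (l.map G.s).Nodup

/-- A cycle is exclusive if no vertex on it is the base of a cycle distinct from it
(cycles being identified with their sets of edges). -/
def ExclusiveCycle (v : G.V) (l : List G.E) : Prop :=
  G.IsCycle v l ∧ ∀ u ∈ G.pathVerts v l, ∀ m, G.IsCycle u m → (∀ e, e ∈ m ↔ e ∈ l)

open Classical in
/-- Auxiliary reduction on reversed edge lists: cancel common initial segments. -/
noncomputable def redAux (G : DiGraph) : List G.E → List G.E → List G.E × List G.E
  | a :: as, b :: bs => if a = b then redAux G as bs else (a :: as, b :: bs)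
  | as, bs => (as, bs)

/-- The reduction function: `red (p, q)` cancels the common final edges of the
paths `p` and `q`, implementing `red(ee*q*) = q*` and `red(pee*q*) = red(pq*)`. -/
noncomputable def red (p q : List G.E) : List G.E × List G.E :=
  ((G.redAux p.reverse q.reverse).1.reverse, (G.redAux p.reverse q.reverse).2.reverse)

/-- The source vertex of an element `pq*` (with `q` a path starting at the base
vertex `v`): the source of `p` if `p` is nonempty, and `r(q)` otherwise. -/
def startVtx (v : G.V) : List G.E × List G.E → G.V
  | ([], q) => G.pathEnd v q
  | (e :: _, _) => G.s e

/-- Membership in the set `Y` associated to a cycle `c` (based at `cv`, with edges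
`cl`) and a vertex `v ∈ c⁰`: pairs `(p, q)` of paths with `r(p) = r(q) ∈ c⁰` and
`s(q) = v`. -/
def MemY (cv : G.V) (cl : List G.E) (v : G.V) (x : List G.E × List G.E) : Prop :=
  G.IsPathFrom (G.startVtx v x) x.1 ∧ G.IsPathFrom v x.2 ∧
    G.pathEnd (G.startVtx v x) x.1 = G.pathEnd v x.2 ∧
    G.pathEnd v x.2 ∈ G.pathVerts cv cl

/-- The degree `|p| − |q|` of an element `pq*`. -/
def degOf (G : DiGraph) (x : List G.E × List G.E) : ℤ :=
  (x.1.length : ℤ) - (x.2.length : ℤ)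

/-- The branching system `X`: reduced elements of `Y`. -/
def Xset (cv : G.V) (cl : List G.E) (v : G.V) : Set (List G.E × List G.E) :=
  {x | G.MemY cv cl v x ∧ G.red x.1 x.2 = x}

/-- The subset `X_w` of `X` of elements with source vertex `w`. -/
def Xvtx (cv : G.V) (cl : List G.E) (v : G.V) (w : G.V) : Set (List G.E × List G.E) :=
  {x ∈ G.Xset cv cl v | G.startVtx v x = w}

/-- The subset `X_e` of `X` of elements of the form `red(e r s*)` with `e r s* ∈ Y`. -/
def Xedge (cv : G.V) (cl : List G.E) (v : G.V) (e : G.E) : Set (List G.E × List G.E) :=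
  {x | ∃ rs : List G.E × List G.E, G.MemY cv cl v (e :: rs.1, rs.2) ∧
    x = G.red (e :: rs.1) rs.2}

/-- The map `σ_e : X_{r(e)} → X_e`, `pq* ↦ red(e p q*)`. -/
noncomputable def sigmaE (e : G.E) (x : List G.E × List G.E) : List G.E × List G.E :=
  G.red (e :: x.1) x.2

end DiGraph

noncomputable section
open Classical

variable (K : Type) [Field K] (G : DiGraph)

/-- Generators of the Leavitt path algebra: vertices, edges and ghost edges. -/
abbrev LVGen (G : DiGraph) : Type := G.V ⊕ G.E ⊕ G.E

/-- The free algebra on the generators. -/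
abbrev LFree : Type := FreeAlgebra K (LVGen G)

/-- Vertex generator. -/
def fv (v : G.V) : LFree K G := FreeAlgebra.ι K (Sum.inl v)
/-- Edge generator. -/
def fe (e : G.E) : LFree K G := FreeAlgebra.ι K (Sum.inr (Sum.inl e))
/-- Ghost edge generator. -/
def fg (e : G.E) : LFree K G := FreeAlgebra.ι K (Sum.inr (Sum.inr e))

/-- The defining relations of the Leavitt path algebra: the path algebra relations
(V), (E) together with (CK1) and (CK2). -/
inductive LRel : LFree K G → LFree K G → Prop
  | vv : ∀ {v w : G.V}, v ≠ w → LRel (fv K G v * fv K G w) 0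
  | v_idem : ∀ v : G.V, LRel (fv K G v * fv K G v) (fv K G v)
  | se : ∀ e : G.E, LRel (fv K G (G.s e) * fe K G e) (fe K G e)
  | er : ∀ e : G.E, LRel (fe K G e * fv K G (G.r e)) (fe K G e)
  | rg : ∀ e : G.E, LRel (fv K G (G.r e) * fg K G e) (fg K G e)
  | gs : ∀ e : G.E, LRel (fg K G e * fv K G (G.s e)) (fg K G e)
  | ck1 : ∀ {e f : G.E}, e ≠ f → LRel (fg K G e * fe K G f) 0
  | ck1e : ∀ e : G.E, LRel (fg K G e * fe K G e) (fv K G (G.r e))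
  | ck2 : ∀ (v : G.V) (h : (G.s ⁻¹' {v}).Finite), (G.s ⁻¹' {v}).Nonempty →
      LRel (fv K G v) (∑ e ∈ h.toFinset, fe K G e * fg K G e)

/-- The Leavitt path algebra `L_K(E)` of `G` over `K`. -/
abbrev LPA : Type := RingQuot (LRel K G)

/-- The image of a vertex in `L_K(E)`. -/
def lv (v : G.V) : LPA K G := RingQuot.mkAlgHom K (LRel K G) (fv K G v)
/-- The image of an edge in `L_K(E)`. -/
def le (e : G.E) : LPA K G := RingQuot.mkAlgHom K (LRel K G) (fe K G e)
/-- The image of a ghost edge in `L_K(E)`. -/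
def lg (e : G.E) : LPA K G := RingQuot.mkAlgHom K (LRel K G) (fg K G e)

/-- The element of `L_K(E)` associated to a path `p` (a list of edges). -/
def pProd (p : List G.E) : LPA K G := (p.map (le K G)).prod
/-- The element `q*` of `L_K(E)` associated to a path `q`. -/
def gProd (q : List G.E) : LPA K G := (q.reverse.map (lg K G)).prod

/-- The set of monomials `pq*` of degree `n` in `L_K(E)`. -/
def MonSet (n : ℤ) : Set (LPA K G) :=
  {x | ∃ (u w : G.V) (p q : List G.E), G.IsPathFrom u p ∧ G.IsPathFrom w q ∧
    G.pathEnd u p = G.pathEnd w q ∧ (p.length : ℤ) - (q.length : ℤ) = n ∧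
    x = lv K G u * pProd K G p * gProd K G q}

/-- The degree-`n` homogeneous component of `L_K(E)`: the `K`-linear span of the
monomials `pq*` with `|p| − |q| = n`. -/
def lpaComp (n : ℤ) : Submodule K (LPA K G) := Submodule.span K (MonSet K G n)

/-- A homogeneous element of `L_K(E)`. -/
def LHomog (x : LPA K G) : Prop := ∃ n : ℤ, x ∈ lpaComp K G n

/-- A graded simple faithful representation of `L_K(E)`: a `ℤ`-graded left module
which is graded simple (a submodule is graded iff it is generated by its
homogeneous elements) and has zero annihilator. -/
structure GradedSimpleFaithfulRep : Type 1 where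
  M : Type
  [acg : AddCommGroup M]
  [mod : Module (LPA K G) M]
  gr : ℤ → AddSubgroup M
  internal : DirectSum.IsInternal gr
  compat : ∀ (i n : ℤ) (x : LPA K G) (m : M),
    x ∈ lpaComp K G i → m ∈ gr n → x • m ∈ gr (i + n)
  nontrivial : ∃ m : M, m ≠ 0
  gsimple : ∀ N : Submodule (LPA K G) M,
    N = Submodule.span (LPA K G) {m : M | m ∈ N ∧ ∃ n : ℤ, m ∈ gr n} →
    N = ⊥ ∨ N = ⊤
  faithful : ∀ x : LPA K G, (∀ m : M, x • m = 0) → x = 0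

attribute [instance] GradedSimpleFaithfulRep.acg GradedSimpleFaithfulRep.mod

/-- `L_K(E)` is graded (left) primitive: it has a graded simple left module with
zero annihilator. -/
def GradedPrimitive : Prop := Nonempty (GradedSimpleFaithfulRep K G)

section Span

variable {R A M ι : Type*} [CommSemiring R] [Semiring A] [Algebra R A]

theorem finite_setOf_mul_ne_zero_of_mem_span {S : Set A} {g : ι → A}
    (hS : ∀ s ∈ S, {i | g i * s ≠ 0}.Finite) {a : A} (ha : a ∈ Submodule.span R S) :
    {i | g i * a ≠ 0}.Finite := by
  obtain ⟨T, hTS, haT⟩ := Submodule.mem_span_finite_of_mem_span ha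
  refine (T.finite_toSet.biUnion fun s hs => hS s (hTS hs)).subset fun i hi => ?_
  by_contra hnot
  simp only [Set.mem_iUnion, Set.mem_ofPred_eq, not_exists, not_not] at hnot
  have : Submodule.span R T ≤ LinearMap.ker (LinearMap.mulLeft R (g i)) :=
    Submodule.span_le.2 fun s hs => hnot s hs
  exact hi (this haT)

theorem exists_mem_mul_smul_ne_zero_of_mem_span [AddCommMonoid M] [Module A M] {S : Set A}
    {g a : A} {m : M} (ha : a ∈ Submodule.span R S) (h : (g * a) • m ≠ 0) :
    ∃ s ∈ S, (g * s) • m ≠ 0 := by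
  contrapose! h
  induction ha using Submodule.span_induction with
  | mem s hs => exact h s hs
  | zero => simp
  | add x y _ _ hx hy => rw [mul_add, add_smul, hx, hy, add_zero]
  | smul k x _ hx => rw [mul_smul_comm, Algebra.smul_def, mul_smul, hx, smul_zero]

end Span

namespace DiGraph

variable {G}

@[simp] lemma isPathFrom_nil (v : G.V) : G.IsPathFrom v [] := by simp [IsPathFrom]

@[simp] lemma isPathFrom_cons {v : G.V} {e : G.E} {l : List G.E} :
    G.IsPathFrom v (e :: l) ↔ G.s e = v ∧ G.IsPathFrom (G.r e) l := by
  simp [IsPathFrom]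

@[simp] lemma pathEnd_nil (v : G.V) : G.pathEnd v [] = v := by simp [pathEnd]

@[simp] lemma pathEnd_cons (v : G.V) (e : G.E) (l : List G.E) :
    G.pathEnd v (e :: l) = G.pathEnd (G.r e) l := by simp [pathEnd]

lemma IsPathFrom.append {v : G.V} {l₁ l₂ : List G.E} (h₁ : G.IsPathFrom v l₁)
    (h₂ : G.IsPathFrom (G.pathEnd v l₁) l₂) : G.IsPathFrom v (l₁ ++ l₂) := by
  induction l₁ generalizing v with
  | nil => simpa using h₂
  | cons e l ih =>
    rw [isPathFrom_cons] at h₁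
    exact isPathFrom_cons.2 ⟨h₁.1, ih h₁.2 (by simpa using h₂)⟩

lemma pathEnd_append (v : G.V) (l₁ l₂ : List G.E) :
    G.pathEnd v (l₁ ++ l₂) = G.pathEnd (G.pathEnd v l₁) l₂ := by
  induction l₁ generalizing v with
  | nil => simp
  | cons e l ih => simpa using ih (G.r e)

lemma IsPathFrom.reach_pathEnd {v : G.V} {l : List G.E} (h : G.IsPathFrom v l) :
    G.Reach v (G.pathEnd v l) := by
  induction l generalizing v with
  | nil => rw [pathEnd_nil]; exact Relation.ReflTransGen.refl
  | cons e l ih =>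
    rw [isPathFrom_cons] at h
    rw [pathEnd_cons]
    exact Relation.ReflTransGen.head ⟨e, h.1, rfl⟩ (ih h.2)

variable (G) in
/-- A boundary path: an infinite path, or a finite path ending at a singular vertex `w`, written
as its sequence of edges followed by `inr w` repeated forever. -/
@[ext] structure BoundaryPath where
  toFun : ℕ → G.E ⊕ G.V
  r_eq : ∀ n e, toFun n = .inl e → G.r e = Sum.elim G.s id (toFun (n + 1))
  stays_singular : ∀ n w, toFun n = .inr w → ¬ G.Regular w ∧ toFun (n + 1) = .inr w

namespace BoundaryPath

def src (x : G.BoundaryPath) : G.V := Sum.elim G.s id (x.toFun 0)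

def tail (x : G.BoundaryPath) : G.BoundaryPath where
  toFun n := x.toFun (n + 1)
  r_eq n := x.r_eq (n + 1)
  stays_singular n := x.stays_singular (n + 1)

def cons (e : G.E) (x : G.BoundaryPath) (h : G.r e = x.src) : G.BoundaryPath where
  toFun n := Nat.casesOn n (.inl e) x.toFun
  r_eq
    | 0, _, he => by cases he; exact h
    | n + 1, e', he => x.r_eq n e' he
  stays_singular
    | 0, _, he => by cases he
    | n + 1, w, hw => x.stays_singular n w hw

@[simp] lemma cons_toFun_zero (e : G.E) (x : G.BoundaryPath) (h : G.r e = x.src) :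
    (x.cons e h).toFun 0 = .inl e := rfl

@[simp] lemma tail_cons (e : G.E) (x : G.BoundaryPath) (h : G.r e = x.src) :
    (x.cons e h).tail = x := rfl

lemma src_eq_of_toFun_zero {x : G.BoundaryPath} {e : G.E} (h : x.toFun 0 = .inl e) :
    x.src = G.s e := by simp [src, h]

lemma r_eq_src_tail {x : G.BoundaryPath} {e : G.E} (h : x.toFun 0 = .inl e) :
    G.r e = x.tail.src := x.r_eq 0 e h

lemma cons_tail {x : G.BoundaryPath} {e : G.E} (h : x.toFun 0 = .inl e) :
    x.tail.cons e (r_eq_src_tail h) = x := by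
  ext1; funext n; cases n with
  | zero => exact h.symm
  | succ n => rfl

lemma not_regular_src {x : G.BoundaryPath} (h : ∀ e, x.toFun 0 ≠ .inl e) :
    ¬ G.Regular x.src := by
  cases hx : x.toFun 0 with
  | inl e => exact absurd hx (h e)
  | inr w => simpa [src, hx] using (x.stays_singular 0 w hx).1

/-- Follow from `v`, at every vertex, some edge it emits, stopping at a sink. -/
theorem exists_src_eq (v : G.V) : ∃ x : G.BoundaryPath, x.src = v := by
  let out : G.V → G.E ⊕ G.V := fun w =>
    if h : (G.s ⁻¹' {w}).Nonempty then .inl h.some else .inr w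
  have src_out : ∀ w, Sum.elim G.s id (out w) = w := fun w => by
    by_cases h : (G.s ⁻¹' {w}).Nonempty
    · simpa [out, h] using h.some_mem
    · simp [out, h]
  let next : G.V → G.V := fun w => Sum.elim G.r id (out w)
  refine ⟨⟨fun n => out (next^[n] v), fun n e he => ?_, fun n w hw => ?_⟩, src_out v⟩
  · rw [Function.iterate_succ_apply', src_out]
    simp [next, he]
  · have hw' : ¬ (G.s ⁻¹' {next^[n] v}).Nonempty ∧ next^[n] v = w := by
      by_cases h : (G.s ⁻¹' {next^[n] v}).Nonempty <;> simp_all [out]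
    refine ⟨fun hreg => hw'.1 (hw'.2 ▸ hreg.1), ?_⟩
    rw [Function.iterate_succ_apply']
    simp [next, hw, ← hw'.2, out, hw'.1]

end BoundaryPath

end DiGraph

section Relations

open DiGraph

variable {G}

lemma lv_mul_lv (v w : G.V) : lv K G v * lv K G w = if v = w then lv K G v else 0 := by
  simp only [lv, ← map_mul]
  split_ifs with h
  · subst h; exact RingQuot.mkAlgHom_rel K (LRel.v_idem v)
  · rw [RingQuot.mkAlgHom_rel K (LRel.vv h), map_zero]

lemma lv_s_mul_le (e : G.E) : lv K G (G.s e) * le K G e = le K G e := by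
  simp only [lv, le, ← map_mul]; exact RingQuot.mkAlgHom_rel K (LRel.se e)

lemma le_mul_lv_r (e : G.E) : le K G e * lv K G (G.r e) = le K G e := by
  simp only [lv, le, ← map_mul]; exact RingQuot.mkAlgHom_rel K (LRel.er e)

lemma lv_r_mul_lg (e : G.E) : lv K G (G.r e) * lg K G e = lg K G e := by
  simp only [lv, lg, ← map_mul]; exact RingQuot.mkAlgHom_rel K (LRel.rg e)

lemma lg_mul_lv_s (e : G.E) : lg K G e * lv K G (G.s e) = lg K G e := by
  simp only [lv, lg, ← map_mul]; exact RingQuot.mkAlgHom_rel K (LRel.gs e)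

lemma lg_mul_le (e f : G.E) : lg K G e * le K G f = if e = f then lv K G (G.r e) else 0 := by
  simp only [lv, le, lg, ← map_mul]
  split_ifs with h
  · subst h; exact RingQuot.mkAlgHom_rel K (LRel.ck1e e)
  · rw [RingQuot.mkAlgHom_rel K (LRel.ck1 h), map_zero]

lemma le_mul_lv (e : G.E) (v : G.V) : le K G e * lv K G v = if G.r e = v then le K G e else 0 := by
  rw [← le_mul_lv_r, mul_assoc, lv_mul_lv]
  split_ifs <;> simp

lemma lg_mul_lv (e : G.E) (v : G.V) : lg K G e * lv K G v = if G.s e = v then lg K G e else 0 := by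
  rw [← lg_mul_lv_s, mul_assoc, lv_mul_lv]
  split_ifs <;> simp

@[simp] lemma pProd_nil : pProd K G ([] : List G.E) = 1 := rfl

@[simp] lemma pProd_cons (e : G.E) (p : List G.E) :
    pProd K G (e :: p) = le K G e * pProd K G p := by
  simp [pProd]

@[simp] lemma gProd_nil : gProd K G ([] : List G.E) = 1 := rfl

@[simp] lemma gProd_cons (e : G.E) (q : List G.E) :
    gProd K G (e :: q) = gProd K G q * lg K G e := by
  simp [gProd]

lemma gProd_append_singleton (q : List G.E) (e : G.E) :
    gProd K G (q ++ [e]) = lg K G e * gProd K G q := by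
  simp [gProd]

lemma lv_mul_pProd {u : G.V} {p : List G.E} (hp : G.IsPathFrom u p) :
    lv K G u * pProd K G p = pProd K G p * lv K G (G.pathEnd u p) := by
  induction p generalizing u with
  | nil => simp
  | cons e p ih =>
    obtain ⟨rfl, hp'⟩ := isPathFrom_cons.1 hp
    rw [pProd_cons, ← mul_assoc, lv_s_mul_le, pathEnd_cons, mul_assoc, ← ih hp', ← mul_assoc,
      le_mul_lv_r]

end Relations

section BoundaryPathRep

open DiGraph

variable {G}

/-- The generators act on functions on boundary paths by `(v • f) x = [s(x) = v] f x`,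
`(e • f) x = [x = e y] f y` and `(e* • f) x = f (e x)`. -/
def boundaryGen : LVGen G → Module.End K (G.BoundaryPath → K)
  | .inl v => LinearMap.pi fun x => if x.src = v then LinearMap.proj x else 0
  | .inr (.inl e) => LinearMap.pi fun x =>
      if x.toFun 0 = .inl e then LinearMap.proj x.tail else 0
  | .inr (.inr e) => LinearMap.pi fun x =>
      if h : G.r e = x.src then LinearMap.proj (x.cons e h) else 0

lemma boundaryGen_vertex_apply (v : G.V) (f : G.BoundaryPath → K) (x : G.BoundaryPath) :
    boundaryGen K (.inl v) f x = if x.src = v then f x else 0 := by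
  simp only [boundaryGen, LinearMap.pi_apply]; split_ifs <;> rfl

lemma boundaryGen_edge_apply (e : G.E) (f : G.BoundaryPath → K) (x : G.BoundaryPath) :
    boundaryGen K (.inr (.inl e)) f x = if x.toFun 0 = .inl e then f x.tail else 0 := by
  simp only [boundaryGen, LinearMap.pi_apply]; split_ifs <;> rfl

lemma boundaryGen_ghost_apply (e : G.E) (f : G.BoundaryPath → K) (x : G.BoundaryPath) :
    boundaryGen K (.inr (.inr e)) f x = if h : G.r e = x.src then f (x.cons e h) else 0 := by
  simp only [boundaryGen, LinearMap.pi_apply]; split_ifs <;> rfl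

theorem boundaryGen_rel ⦃a b : LFree K G⦄ (h : LRel K G a b) :
    FreeAlgebra.lift K (boundaryGen K) a = FreeAlgebra.lift K (boundaryGen K) b := by
  refine LinearMap.ext fun f => funext fun x => ?_
  cases h with
  | ck2 v hfin hne =>
    simp only [fv, fe, fg, map_sum, map_mul, FreeAlgebra.lift_ι_apply, LinearMap.sum_apply,
      Finset.sum_apply, Module.End.mul_apply, boundaryGen_vertex_apply, boundaryGen_edge_apply,
      boundaryGen_ghost_apply]
    cases hx : x.toFun 0 with
    | inl e₀ =>
      have hterm : ∀ e, (if x.toFun 0 = .inl e then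
          (if h : G.r e = x.tail.src then f (x.tail.cons e h) else 0) else 0) =
          if e = e₀ then f x else 0 := fun e => by
        by_cases he : e = e₀
        · subst he; simp [hx, ← BoundaryPath.r_eq_src_tail hx, BoundaryPath.cons_tail hx]
        · simp [hx, he, Ne.symm he]
      simp only [← hx, hterm, Finset.sum_ite_eq', Set.Finite.mem_toFinset, Set.mem_preimage,
        Set.mem_singleton_iff, BoundaryPath.src_eq_of_toFun_zero hx]
    | inr w =>
      have hw : x.src ≠ v := by
        rintro rfl
        exact BoundaryPath.not_regular_src (fun e => by simp [hx]) ⟨hne, hfin⟩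
      simp [hw]
  | _ =>
    simp only [fv, fe, fg, map_mul, map_zero, FreeAlgebra.lift_ι_apply, Module.End.mul_apply,
      boundaryGen_vertex_apply, boundaryGen_edge_apply, boundaryGen_ghost_apply,
      LinearMap.zero_apply, Pi.zero_apply]
    split_ifs <;> simp_all [BoundaryPath.src_eq_of_toFun_zero, ← BoundaryPath.r_eq_src_tail]

variable (G) in
def boundaryPathRep : LPA K G →ₐ[K] Module.End K (G.BoundaryPath → K) :=
  RingQuot.liftAlgHom K ⟨FreeAlgebra.lift K (boundaryGen K), boundaryGen_rel K⟩

theorem lv_ne_zero (v : G.V) : lv K G v ≠ 0 := by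
  intro h
  obtain ⟨x, hx⟩ := BoundaryPath.exists_src_eq v
  have := congr($(congrArg (boundaryPathRep K G) h) (fun _ => (1 : K)) x)
  simp [boundaryPathRep, lv, fv, boundaryGen_vertex_apply, hx] at this

end BoundaryPathRep

section MonomialSpan

open DiGraph

variable {G}

lemma lv_mul_monomial (v u : G.V) (p q : List G.E) :
    lv K G v * (lv K G u * pProd K G p * gProd K G q) =
      if v = u then lv K G u * pProd K G p * gProd K G q else 0 := by
  rw [← mul_assoc, ← mul_assoc, lv_mul_lv]
  split_ifs with h
  · rw [h]
  · simp

lemma lg_mul_monomial_cons {u : G.V} {f : G.E} (hf : G.s f = u) (e : G.E) (p q : List G.E) :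
    lg K G e * (lv K G u * pProd K G (f :: p) * gProd K G q) =
      if e = f then lv K G (G.r f) * pProd K G p * gProd K G q else 0 := by
  rw [← hf, pProd_cons, ← mul_assoc (lv K G _), lv_s_mul_le, ← mul_assoc, ← mul_assoc,
    lg_mul_le]
  split_ifs with h
  · rw [h]
  · simp

lemma mem_monSet {u w : G.V} {p q : List G.E} (hp : G.IsPathFrom u p) (hq : G.IsPathFrom w q)
    (he : G.pathEnd u p = G.pathEnd w q) :
    lv K G u * pProd K G p * gProd K G q ∈ MonSet K G (p.length - q.length) :=
  ⟨u, w, p, q, hp, hq, he, rfl, rfl⟩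

lemma lv_mem_lpaComp (v : G.V) : lv K G v ∈ lpaComp K G 0 :=
  Submodule.subset_span (by simpa using mem_monSet K (isPathFrom_nil v) (isPathFrom_nil v) rfl)

lemma lg_mem_lpaComp (e : G.E) : lg K G e ∈ lpaComp K G (-1) :=
  Submodule.subset_span (by
    simpa [gProd, lv_r_mul_lg] using
      mem_monSet K (isPathFrom_nil (G.r e)) (isPathFrom_cons.2 ⟨rfl, isPathFrom_nil _⟩)
        (by simp : G.pathEnd (G.r e) [] = G.pathEnd (G.s e) [e]))

variable (G) in
/-- When `E⁰` is infinite this is the Leavitt path algebra proper: it does not contain the unit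
that `LPA K G` inherits from the free algebra. -/
def monomialSpan : Submodule K (LPA K G) := Submodule.span K (⋃ n, MonSet K G n)

lemma monomialSpan_eq_iSup : monomialSpan K G = ⨆ n, lpaComp K G n := Submodule.span_iUnion _

lemma lpaComp_le_monomialSpan (n : ℤ) : lpaComp K G n ≤ monomialSpan K G :=
  Submodule.span_mono (Set.subset_iUnion _ n)

lemma mem_monomialSpan {u w : G.V} {p q : List G.E} (hp : G.IsPathFrom u p)
    (hq : G.IsPathFrom w q) (he : G.pathEnd u p = G.pathEnd w q) :
    lv K G u * pProd K G p * gProd K G q ∈ monomialSpan K G :=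
  lpaComp_le_monomialSpan K _ (Submodule.subset_span (mem_monSet K hp hq he))

lemma le_mul_mem_monomialSpan (e : G.E) {x : LPA K G} (hx : x ∈ ⋃ n, MonSet K G n) :
    le K G e * x ∈ monomialSpan K G := by
  obtain ⟨n, u, w, p, q, hp, hq, he, -, rfl⟩ := Set.mem_iUnion.1 hx
  rw [← mul_assoc, ← mul_assoc, le_mul_lv]
  split_ifs with h
  · rw [← lv_s_mul_le, mul_assoc (lv K G _), ← pProd_cons]
    exact mem_monomialSpan K (isPathFrom_cons.2 ⟨rfl, h ▸ hp⟩) hq (by simpa [h] using he)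
  · simp

lemma lg_mul_mem_monomialSpan (e : G.E) {x : LPA K G} (hx : x ∈ ⋃ n, MonSet K G n) :
    lg K G e * x ∈ monomialSpan K G := by
  obtain ⟨n, u, w, p, q, hp, hq, he, -, rfl⟩ := Set.mem_iUnion.1 hx
  cases p with
  | nil =>
    rw [pProd_nil, mul_one, ← mul_assoc, lg_mul_lv]
    split_ifs with h
    · have hu : G.pathEnd w q = u := by simpa using he.symm
      rw [← lv_r_mul_lg, mul_assoc, ← gProd_append_singleton, ← mul_one (lv K G _),
        ← pProd_nil]
      exact mem_monomialSpan K (isPathFrom_nil _)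
        (hq.append (isPathFrom_cons.2 ⟨h.trans hu.symm, isPathFrom_nil _⟩))
        (by simp [pathEnd_append])
    · simp
  | cons f p =>
    obtain ⟨hf, hp⟩ := isPathFrom_cons.1 hp
    rw [lg_mul_monomial_cons K hf]
    split_ifs
    · exact mem_monomialSpan K hp hq (by simpa using he)
    · exact zero_mem _

lemma gen_mul_mem_monomialSpan (g : LVGen G) {x : LPA K G} (hx : x ∈ ⋃ n, MonSet K G n) :
    RingQuot.mkAlgHom K (LRel K G) (FreeAlgebra.ι K g) * x ∈ monomialSpan K G := by
  rcases g with v | e | e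
  · obtain ⟨n, u, w, p, q, hp, hq, he, -, rfl⟩ := Set.mem_iUnion.1 hx
    change lv K G v * _ ∈ _
    rw [lv_mul_monomial]
    split_ifs
    · exact mem_monomialSpan K hp hq he
    · exact zero_mem _
  · exact le_mul_mem_monomialSpan K e hx
  · exact lg_mul_mem_monomialSpan K e hx

theorem mul_mem_monomialSpan (x : LPA K G) {a : LPA K G} (ha : a ∈ monomialSpan K G) :
    x * a ∈ monomialSpan K G := by
  obtain ⟨x, rfl⟩ := RingQuot.mkAlgHom_surjective K (LRel K G) x
  induction x using FreeAlgebra.induction generalizing a with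
  | grade0 k => rw [AlgHom.commutes, ← Algebra.smul_def]; exact Submodule.smul_mem _ k ha
  | grade1 g =>
    induction ha using Submodule.span_induction with
    | mem y hy => exact gen_mul_mem_monomialSpan K g hy
    | zero => simp
    | add y z _ _ hy hz => rw [mul_add]; exact add_mem hy hz
    | smul k y _ hy => rw [mul_smul_comm]; exact Submodule.smul_mem _ k hy
  | mul x y hx hy => rw [map_mul, mul_assoc]; exact hx (hy ha)
  | add x y hx hy => rw [map_add, add_mul]; exact add_mem (hx ha) (hy ha)

theorem exists_reach_of_lv_mul_smul_ne_zero {M : Type*} [AddCommGroup M] [Module (LPA K G) M]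
    {v : G.V} {m : M} {b : LPA K G} (hb : b ∈ monomialSpan K G) (h : (lv K G v * b) • m ≠ 0) :
    ∃ z, G.Reach v z ∧ ∃ q, lv K G z • gProd K G q • m ≠ 0 := by
  obtain ⟨x, hx, hxm⟩ := exists_mem_mul_smul_ne_zero_of_mem_span hb h
  obtain ⟨n, u, w, p, q, hp, hq, he, -, rfl⟩ := Set.mem_iUnion.1 hx
  rw [lv_mul_monomial] at hxm
  split_ifs at hxm with hvu
  · subst hvu
    refine ⟨G.pathEnd v p, hp.reach_pathEnd, q, fun h0 => hxm ?_⟩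
    rw [lv_mul_pProd K hp, mul_assoc, mul_smul, mul_smul, h0, smul_zero]
  · simp at hxm

end MonomialSpan

namespace GradedSimpleFaithfulRep

variable {K G} (R : GradedSimpleFaithfulRep K G)

theorem exists_mem_gr_smul_ne_zero {g : LPA K G} (hg : g ≠ 0) :
    ∃ i, ∃ m ∈ R.gr i, g • m ≠ 0 := by
  by_contra! h
  refine hg (R.faithful g fun m => ?_)
  obtain ⟨x, rfl⟩ := R.internal.surjective m
  induction x using DirectSum.induction_on with
  | zero => simp
  | of i y => simpa using h i y y.2
  | add x y hx hy => rw [map_add, smul_add, hx, hy, add_zero]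

theorem span_singleton_eq_top {i : ℤ} {m : R.M} (hm : m ∈ R.gr i) (h0 : m ≠ 0) :
    Submodule.span (LPA K G) {m} = ⊤ := by
  refine (R.gsimple _ (le_antisymm ?_ (Submodule.span_le.2 fun x hx => hx.1))).resolve_left ?_
  · exact Submodule.span_le.2 (Set.singleton_subset_iff.2
      (Submodule.subset_span ⟨Submodule.mem_span_singleton_self m, i, hm⟩))
  · rwa [Submodule.span_singleton_eq_bot]

/-- Writing `m = x m₀ = (x w) m₀` puts the coefficient into `monomialSpan`. -/
theorem exists_mem_monomialSpan_smul_eq {i : ℤ} {w : G.V} {m₀ : R.M} (hm₀ : m₀ ∈ R.gr i)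
    (h0 : m₀ ≠ 0) (hw : lv K G w • m₀ = m₀) (m : R.M) :
    ∃ b ∈ monomialSpan K G, b • m₀ = m := by
  obtain ⟨x, hx⟩ := Submodule.mem_span_singleton.1
    ((R.span_singleton_eq_top hm₀ h0).ge Submodule.mem_top : m ∈ _)
  have hw' : lv K G w ∈ monomialSpan K G := lpaComp_le_monomialSpan K 0 (lv_mem_lpaComp K w)
  exact ⟨x * lv K G w, mul_mem_monomialSpan K x hw', by rw [mul_smul, hw, hx]⟩

theorem exists_mem_lpaComp_smul_eq {i j n : ℤ} (hn : n + i = j) {m₀ : R.M}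
    (hm₀ : m₀ ∈ R.gr i) {b : LPA K G} (hb : b ∈ monomialSpan K G)
    (hbm : b • m₀ ∈ R.gr j) :
    ∃ c ∈ lpaComp K G n, c • m₀ = b • m₀ := by
  -- `c` is the component of `b` of degree `n`
  have hproj : ∃ c ∈ lpaComp K G n,
      b • m₀ - c • m₀ ∈ ⨆ (k) (_ : k ≠ j), R.gr k := by
    rw [monomialSpan_eq_iSup] at hb
    refine Submodule.iSup_induction _ (motive := fun b => ∃ c ∈ lpaComp K G n,
      b • m₀ - c • m₀ ∈ ⨆ (k) (_ : k ≠ j), R.gr k) hb ?_ ?_ ?_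
    · intro d x hx
      by_cases hd : d = n
      · subst hd
        exact ⟨x, hx, by simp⟩
      · refine ⟨0, zero_mem _, ?_⟩
        rw [zero_smul, sub_zero]
        exact le_iSup₂ (f := fun k (_ : k ≠ j) => R.gr k) (d + i) (by omega)
          (R.compat d i x m₀ hx hm₀)
    · exact ⟨0, zero_mem _, by simp⟩
    · rintro x y ⟨c, hc, hx⟩ ⟨c', hc', hy⟩
      refine ⟨c + c', add_mem hc hc', ?_⟩
      rw [add_smul, add_smul, add_sub_add_comm]
      exact add_mem hx hy
  obtain ⟨c, hc, hdiff⟩ := hproj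
  have hcm : c • m₀ ∈ R.gr j := hn ▸ R.compat n i c m₀ hc hm₀
  refine ⟨c, hc, (sub_eq_zero.1 ?_).symm⟩
  exact AddSubgroup.disjoint_def.1 (R.internal.addSubgroup_iSupIndep j) (sub_mem hbm hcm) hdiff

lemma lv_smul_mem_gr (v : G.V) {j : ℤ} {m : R.M} (hm : m ∈ R.gr j) :
    lv K G v • m ∈ R.gr j := by
  simpa using R.compat _ _ _ _ (lv_mem_lpaComp K v) hm

lemma lg_smul_mem_gr (e : G.E) {j : ℤ} {m : R.M} (hm : m ∈ R.gr j) :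
    lg K G e • m ∈ R.gr (-1 + j) :=
  R.compat _ _ _ _ (lg_mem_lpaComp K e) hm

theorem finite_setOf_lv_smul_ne_zero {j : ℤ} {m : R.M} (hm : m ∈ R.gr j) :
    {w : G.V | lv K G w • m ≠ 0}.Finite := by
  rcases Set.eq_empty_or_nonempty {w : G.V | lv K G w • m ≠ 0} with h | ⟨w₀, hw₀⟩
  · exact h ▸ Set.finite_empty
  obtain ⟨b, hb, hbm⟩ := R.exists_mem_monomialSpan_smul_eq (R.lv_smul_mem_gr w₀ hm) hw₀
    (by rw [smul_smul, lv_mul_lv, if_pos rfl]) m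
  refine (finite_setOf_mul_ne_zero_of_mem_span (g := lv K G) (fun x hx => ?_) hb).subset
    fun w hw hb0 => hw ?_
  · obtain ⟨n, u, w, p, q, hp, hq, he, -, rfl⟩ := Set.mem_iUnion.1 hx
    refine (Set.finite_singleton u).subset fun v hv => ?_
    by_contra h
    exact hv (by rw [lv_mul_monomial, if_neg (Set.notMem_singleton_iff.1 h)])
  · rw [← hbm, smul_smul, hb0, zero_smul]

theorem finite_setOf_lg_smul_ne_zero {j : ℤ} {m : R.M} (hm : m ∈ R.gr j) :
    {e : G.E | lg K G e • m ≠ 0}.Finite := by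
  rcases Set.eq_empty_or_nonempty {e : G.E | lg K G e • m ≠ 0} with h | ⟨e₀, he₀⟩
  · exact h ▸ Set.finite_empty
  have hm₀ := R.lg_smul_mem_gr e₀ hm
  obtain ⟨b, hb, hbm⟩ := R.exists_mem_monomialSpan_smul_eq hm₀ he₀
    (by rw [smul_smul, lv_r_mul_lg]) m
  -- the monomials of `c` have degree `1`, so start with an edge `f`, and `e* f = 0` if `e ≠ f`
  obtain ⟨c, hc, hcm⟩ := R.exists_mem_lpaComp_smul_eq (n := 1) (by ring) hm₀ hb (hbm ▸ hm)
  refine (finite_setOf_mul_ne_zero_of_mem_span (g := lg K G) (fun x hx => ?_) hc).subset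
    fun e he hc0 => he ?_
  · obtain ⟨u, w, p, q, hp, hq, he, hdeg, rfl⟩ := hx
    cases p with
    | nil => simp at hdeg; omega
    | cons f p =>
      refine (Set.finite_singleton f).subset fun e he => ?_
      by_contra h
      exact he (by rw [lg_mul_monomial_cons K (DiGraph.isPathFrom_cons.1 hp).1,
        if_neg (Set.notMem_singleton_iff.1 h)])
  · rw [← hbm, ← hcm, smul_smul, hc0, zero_smul]

theorem finite_setOf_lv_smul_gProd_ne_zero (d : ℕ) {j : ℤ} {m : R.M} (hm : m ∈ R.gr j) :
    {z : G.V | ∃ q : List G.E, q.length = d ∧ lv K G z • gProd K G q • m ≠ 0}.Finite := by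
  induction d generalizing j m with
  | zero =>
    refine (R.finite_setOf_lv_smul_ne_zero hm).subset ?_
    rintro z ⟨q, hq, hz⟩
    simpa [List.length_eq_zero_iff.1 hq] using hz
  | succ d ih =>
    refine ((R.finite_setOf_lg_smul_ne_zero hm).biUnion fun e _ =>
      ih (R.lg_smul_mem_gr e hm)).subset ?_
    rintro z ⟨_ | ⟨e, q⟩, hq, hz⟩
    · simp at hq
    · rw [gProd_cons, mul_smul] at hz
      exact Set.mem_biUnion (fun h => hz (by rw [h, smul_zero, smul_zero]))
        ⟨q, by simpa using hq, hz⟩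

theorem countable_setOf_lv_smul_gProd_ne_zero {j : ℤ} {m : R.M} (hm : m ∈ R.gr j) :
    {z : G.V | ∃ q : List G.E, lv K G z • gProd K G q • m ≠ 0}.Countable := by
  refine (Set.countable_iUnion fun d =>
    (R.finite_setOf_lv_smul_gProd_ne_zero d hm).countable).mono ?_
  rintro z ⟨q, hz⟩
  exact Set.mem_iUnion.2 ⟨q.length, q, rfl, hz⟩

end GradedSimpleFaithfulRep

/-- If the Leavitt path algebra `L_K(E)` is graded left primitive, then the vertex
set `E⁰` has the Countable Separation Property. -/
theorem csp_of_gradedPrimitive (h : GradedPrimitive K G) :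
    G.CSP (Set.univ : Set G.V) := by
  obtain ⟨R⟩ := h
  rcases isEmpty_or_nonempty G.V with hV | ⟨⟨w⟩⟩
  · exact ⟨∅, Set.countable_empty, fun v => isEmptyElim v⟩
  obtain ⟨i, m, hm, hwm⟩ := R.exists_mem_gr_smul_ne_zero (lv_ne_zero K w)
  have hm₀ := R.lv_smul_mem_gr w hm
  refine ⟨_, R.countable_setOf_lv_smul_gProd_ne_zero hm₀, fun v _ => ?_⟩
  obtain ⟨m', hm'⟩ : ∃ m' : R.M, lv K G v • m' ≠ 0 := by
    by_contra! h
    exact lv_ne_zero K v (R.faithful _ h)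
  obtain ⟨b, hb, rfl⟩ := R.exists_mem_monomialSpan_smul_eq hm₀ hwm
    (by rw [smul_smul, lv_mul_lv, if_pos rfl]) m'
  obtain ⟨z, hvz, hz⟩ := exists_reach_of_lv_mul_smul_ne_zero K hb (m := lv K G w • m)
    (by rwa [mul_smul])
  exact ⟨z, hz, hvz⟩

end
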